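/- arXiv:1507.01622 — 4 statements merged into one kernel-verified Lean document; each statement's English description precedes it below -/
import Mathlib

section
/- Let α > −1, let q ≥ 0 be an integer, and let n ≥ 1 be an integer. Suppose G is a monic polynomial of degree 2n with real coefficients such that ∫_{−1}^{1} |x|^{2q+2} (1−x²)^{α+1} x^k G(x) dx = 0 for all integers 0 ≤ k ≤ 2n−1. Then the polynomial (1+x)G(x) of degree 2n+1 satisfies ∫_{−1}^{1} x^{2q+1} (1−x²)^α (1−x) x^k (1+x) G(x) dx = 0 for all integers 0 ≤ k ≤ 2n, while ∫_{−1}^{1} x^{2q+1} (1−x²)^α (1−x) x^{2n+1} (1+x) G(x) dx ≠ 0. -/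
open MeasureTheory intervalIntegral Polynomial

/-!
The weight `w(x) = |x|^{2q+2}(1-x²)^{α+1}` is even, so the reflection `G(-x)` is again a monic
`w`-orthogonal polynomial of degree `2n`; by uniqueness `G` is even. On `[-1,1]` the signed weight
times `x^{k+1}(1+x)` is `w(x) x^k`, which gives orthogonality for `1 ≤ k ≤ 2n` and turns the moment
of order `2n+1` into `∫ w x^{2n} G = ∫ w G² > 0`. For `k = 0` the integrand
`x^{2q+1}(1-x²)^{α+1}G(x)` is odd.
-/

theorem intervalIntegral.integral_eq_zero_of_odd {f : ℝ → ℝ} (hf : Function.Odd f) (a : ℝ) :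
    ∫ x in -a..a, f x = 0 := by
  have h := intervalIntegral.integral_comp_neg (a := -a) (b := a) f
  simp only [hf _, intervalIntegral.integral_neg, neg_neg] at h
  linarith

namespace Polynomial

section OrthogonalPolynomial

variable {w : ℝ → ℝ} {a b : ℝ}

theorem integral_mul_eval_mul_eq_zero_of_degree_lt (hw : IntervalIntegrable w volume a b)
    {m : ℕ} {F : ℝ[X]} (hF : ∀ k < m, ∫ x in a..b, w x * x ^ k * F.eval x = 0)
    {P : ℝ[X]} (hP : P.degree < m) :
    ∫ x in a..b, w x * (P.eval x * F.eval x) = 0 := by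
  rcases eq_or_ne P 0 with rfl | hP0
  · simp
  have hsum : ∀ x, w x * (P.eval x * F.eval x)
      = ∑ i ∈ Finset.range m, P.coeff i * (w x * x ^ i * F.eval x) := fun x => by
    rw [eval_eq_sum_range' ((natDegree_lt_iff_degree_lt hP0).mpr hP), Finset.sum_mul,
      Finset.mul_sum]
    exact Finset.sum_congr rfl fun i _ => by ring
  simp_rw [hsum]
  rw [intervalIntegral.integral_finsetSum fun i _ => ?_]
  · exact Finset.sum_eq_zero fun i hi => by
      rw [intervalIntegral.integral_const_mul, hF i (Finset.mem_range.mp hi), mul_zero]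
  · simpa only [mul_assoc] using (hw.mul_continuousOn (g := fun x => x ^ i * F.eval x)
      (by fun_prop)).const_mul (P.coeff i)

theorem integral_mul_eval_sq_pos (hab : a < b) (hwc : ContinuousOn w (Set.Icc a b))
    (hw0 : ∀ x ∈ Set.Icc a b, 0 ≤ w x) (hwpos : (Set.Icc a b ∩ {x | 0 < w x}).Infinite)
    {P : ℝ[X]} (hP : P ≠ 0) :
    0 < ∫ x in a..b, w x * P.eval x ^ 2 := by
  obtain ⟨c, ⟨hcI, hc0⟩, hPc⟩ := (hwpos.sdiff (P.finite_setOfPred_isRoot hP)).nonempty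
  refine integral_pos hab (hwc.mul (by fun_prop)) ?_ ⟨c, hcI, ?_⟩
  · exact fun x hx => mul_nonneg (hw0 x (Set.Ioc_subset_Icc_self hx)) (sq_nonneg _)
  · exact mul_pos hc0 (sq_pos_iff.mpr hPc)

theorem eq_of_monic_of_orthogonal (hab : a < b) (hwc : ContinuousOn w (Set.Icc a b))
    (hw0 : ∀ x ∈ Set.Icc a b, 0 ≤ w x) (hwpos : (Set.Icc a b ∩ {x | 0 < w x}).Infinite)
    {F H : ℝ[X]} (hF : F.Monic) (hH : H.Monic) (hFH : F.natDegree = H.natDegree)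
    (hFo : ∀ k < F.natDegree, ∫ x in a..b, w x * x ^ k * F.eval x = 0)
    (hHo : ∀ k < F.natDegree, ∫ x in a..b, w x * x ^ k * H.eval x = 0) :
    F = H := by
  by_contra hne
  have hw : IntervalIntegrable w volume a b :=
    ContinuousOn.intervalIntegrable (by rwa [Set.uIcc_of_le hab.le])
  have hdeg : (F - H).degree < F.natDegree := by
    rw [← degree_eq_natDegree hF.ne_zero]
    refine degree_sub_lt_left ?_ hF.ne_zero (by rw [hF.leadingCoeff, hH.leadingCoeff])
    rw [degree_eq_natDegree hF.ne_zero, degree_eq_natDegree hH.ne_zero, hFH]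
  have hzero : ∫ x in a..b, w x * (F - H).eval x ^ 2 = 0 := by
    have hsplit : ∀ x, w x * (F - H).eval x ^ 2
        = w x * ((F - H).eval x * F.eval x) - w x * ((F - H).eval x * H.eval x) := fun x => by
      simp only [eval_sub]; ring
    simp_rw [hsplit]
    rw [intervalIntegral.integral_sub (hw.mul_continuousOn (by fun_prop))
        (hw.mul_continuousOn (by fun_prop)),
      integral_mul_eval_mul_eq_zero_of_degree_lt hw hFo hdeg,
      integral_mul_eval_mul_eq_zero_of_degree_lt hw hHo hdeg, sub_zero]
  exact (integral_mul_eval_sq_pos hab hwc hw0 hwpos (sub_ne_zero.mpr hne)).ne' hzero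

theorem integral_mul_pow_natDegree_mul_eval_eq (hw : IntervalIntegrable w volume a b)
    {F : ℝ[X]} (hF : F.Monic) (hFo : ∀ k < F.natDegree, ∫ x in a..b, w x * x ^ k * F.eval x = 0) :
    ∫ x in a..b, w x * x ^ F.natDegree * F.eval x = ∫ x in a..b, w x * F.eval x ^ 2 := by
  have hdeg : (X ^ F.natDegree - F).degree < (F.natDegree : WithBot ℕ) := by
    rw [← degree_X_pow (R := ℝ)]
    exact degree_sub_lt_left (by rw [degree_X_pow, degree_eq_natDegree hF.ne_zero])
      (pow_ne_zero _ X_ne_zero) (by rw [leadingCoeff_X_pow, hF.leadingCoeff])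
  have hsplit : ∀ x, w x * x ^ F.natDegree * F.eval x
      = w x * ((X ^ F.natDegree - F).eval x * F.eval x) + w x * F.eval x ^ 2 := fun x => by
    simp only [eval_sub, eval_pow, eval_X]; ring
  simp_rw [hsplit]
  rw [intervalIntegral.integral_add (hw.mul_continuousOn (by fun_prop))
      (hw.mul_continuousOn (by fun_prop)),
    integral_mul_eval_mul_eq_zero_of_degree_lt hw hFo hdeg, zero_add]

theorem integral_comp_neg_X_eq_zero_of_even_weight (hw : Function.Even w) {m : ℕ} {F : ℝ[X]}
    (hF : ∀ k < m, ∫ x in -a..a, w x * x ^ k * F.eval x = 0) :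
    ∀ k < m, ∫ x in -a..a, w x * x ^ k * (F.comp (-X)).eval x = 0 := by
  intro k hk
  have hreflect : ∀ x, w x * x ^ k * (F.comp (-X)).eval x
      = (-1) ^ k * (w (-x) * (-x) ^ k * F.eval (-x)) := fun x => by
    have hsq : ((-1 : ℝ) ^ k) * (-1) ^ k = 1 := by rw [← mul_pow]; norm_num
    rw [hw, neg_pow x, eval_comp, eval_neg, eval_X]
    linear_combination -(w x * x ^ k * F.eval (-x)) * hsq
  simp_rw [hreflect]
  rw [intervalIntegral.integral_const_mul,
    intervalIntegral.integral_comp_neg fun y => w y * y ^ k * F.eval y, neg_neg, hF k hk, mul_zero]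

theorem comp_neg_X_eq_self_of_monic_of_orthogonal {a : ℝ} (ha : 0 < a)
    (hwc : ContinuousOn w (Set.Icc (-a) a)) (hw0 : ∀ x ∈ Set.Icc (-a) a, 0 ≤ w x)
    (hwpos : (Set.Icc (-a) a ∩ {x | 0 < w x}).Infinite) (hw : Function.Even w) {F : ℝ[X]}
    (hF : F.Monic) (hFd : Even F.natDegree)
    (hFo : ∀ k < F.natDegree, ∫ x in -a..a, w x * x ^ k * F.eval x = 0) :
    F.comp (-X) = F := by
  have hdeg : (F.comp (-X)).natDegree = F.natDegree := by simp [natDegree_comp]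
  refine (eq_of_monic_of_orthogonal (by linarith) hwc hw0 hwpos hF ?_ hdeg.symm hFo
    (integral_comp_neg_X_eq_zero_of_even_weight hw hFo)).symm
  simp [Monic, hF.leadingCoeff, hFd.neg_one_pow]

end OrthogonalPolynomial

end Polynomial

-- The generalized Gegenbauer weight with parameters `λ = α + 1` and `μ = 2q + 2`.
noncomputable def genGegenbauerWeight (q : ℕ) (α x : ℝ) : ℝ :=
  |x| ^ (2 * q + 2) * (1 - x ^ 2) ^ (α + 1)

section GenGegenbauerWeight

variable {q : ℕ} {α : ℝ}

theorem continuous_genGegenbauerWeight (hα : -1 < α) : Continuous (genGegenbauerWeight q α) := by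
  unfold genGegenbauerWeight
  exact (continuous_abs.pow _).mul
    ((Real.continuous_rpow_const (by linarith)).comp (by fun_prop))

theorem genGegenbauerWeight_nonneg {x : ℝ} (hx : x ∈ Set.Icc (-1 : ℝ) 1) :
    0 ≤ genGegenbauerWeight q α x :=
  mul_nonneg (by positivity) (Real.rpow_nonneg (by nlinarith [hx.1, hx.2]) _)

theorem infinite_genGegenbauerWeight_pos :
    (Set.Icc (-1 : ℝ) 1 ∩ {x | 0 < genGegenbauerWeight q α x}).Infinite := by
  refine Set.Infinite.mono (fun x hx => ⟨⟨by linarith [hx.1], hx.2.le⟩, ?_⟩)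
    (Set.Ioo_infinite (zero_lt_one' ℝ))
  exact mul_pos (pow_pos (abs_pos.mpr hx.1.ne') _)
    (Real.rpow_pos_of_pos (by nlinarith [hx.1, hx.2]) _)

theorem even_genGegenbauerWeight : Function.Even (genGegenbauerWeight q α) := fun x => by
  simp only [genGegenbauerWeight, abs_neg, neg_sq]

theorem one_sub_sq_rpow_mul_one_sub_mul_one_add (hα : α + 1 ≠ 0) {x : ℝ} (hx : x ^ 2 ≤ 1) :
    (1 - x ^ 2) ^ α * (1 - x) * (1 + x) = (1 - x ^ 2) ^ (α + 1) := by
  rw [Real.rpow_add_one' (by linarith) hα]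
  ring

theorem integral_signed_weight_mul_pow_succ (hα : -1 < α) (k : ℕ) (g : ℝ → ℝ) :
    ∫ x in (-1 : ℝ)..1, x ^ (2 * q + 1) * (1 - x ^ 2) ^ α * (1 - x) * x ^ (k + 1) * ((1 + x) * g x)
      = ∫ x in (-1 : ℝ)..1, genGegenbauerWeight q α x * x ^ k * g x := by
  refine intervalIntegral.integral_congr fun x hx => ?_
  rw [Set.uIcc_of_le (by norm_num)] at hx
  have hx2 : x ^ 2 ≤ 1 := by nlinarith [hx.1, hx.2]
  have habs : |x| ^ (2 * q + 2) = x ^ (2 * q + 2) := (even_two_mul (q + 1)).pow_abs x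
  calc x ^ (2 * q + 1) * (1 - x ^ 2) ^ α * (1 - x) * x ^ (k + 1) * ((1 + x) * g x)
      = x ^ (2 * q + 2) * ((1 - x ^ 2) ^ α * (1 - x) * (1 + x)) * x ^ k * g x := by ring
    _ = genGegenbauerWeight q α x * x ^ k * g x := by
      rw [one_sub_sq_rpow_mul_one_sub_mul_one_add (by linarith) hx2, ← habs]; rfl

theorem integral_signed_weight_eq_zero_of_even (hα : -1 < α) {g : ℝ → ℝ} (hg : Function.Even g) :
    ∫ x in (-1 : ℝ)..1, x ^ (2 * q + 1) * (1 - x ^ 2) ^ α * (1 - x) * ((1 + x) * g x) = 0 := by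
  have hodd : Function.Odd fun x : ℝ => x ^ (2 * q + 1) * ((1 - x ^ 2) ^ (α + 1) * g x) :=
    fun x => by simp only [(odd_two_mul_add_one q).neg_pow, neg_sq, hg x, neg_mul]
  rw [← intervalIntegral.integral_eq_zero_of_odd hodd 1]
  refine intervalIntegral.integral_congr fun x hx => ?_
  rw [Set.uIcc_of_le (by norm_num)] at hx
  have hx2 : x ^ 2 ≤ 1 := by nlinarith [hx.1, hx.2]
  rw [← one_sub_sq_rpow_mul_one_sub_mul_one_add (α := α) (by linarith) hx2]
  ring

end GenGegenbauerWeight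

theorem shifted_gg_orthogonal_signed_weight_general (α : ℝ) (hα : -1 < α) (q : ℕ) (n : ℕ)
    (G : Polynomial ℝ) (hGm : G.Monic) (hGd : G.natDegree = 2 * n)
    (hG : ∀ k : ℕ, k < 2 * n →
      ∫ x in (-1 : ℝ)..1, |x| ^ (2 * q + 2) * (1 - x ^ 2) ^ (α + 1) * x ^ k * G.eval x = 0) :
    (∀ k : ℕ, k < 2 * n + 1 →
      ∫ x in (-1 : ℝ)..1,
        x ^ (2 * q + 1) * (1 - x ^ 2) ^ α * (1 - x) * x ^ k * ((1 + x) * G.eval x) = 0) ∧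
    (∫ x in (-1 : ℝ)..1,
        x ^ (2 * q + 1) * (1 - x ^ 2) ^ α * (1 - x) * x ^ (2 * n + 1) * ((1 + x) * G.eval x))
      ≠ 0 := by
  have hwc := (continuous_genGegenbauerWeight (q := q) hα).continuousOn (s := Set.Icc (-1) 1)
  have hGo : ∀ k < G.natDegree,
      ∫ x in (-1 : ℝ)..1, genGegenbauerWeight q α x * x ^ k * G.eval x = 0 := hGd ▸ hG
  have hGeven : Function.Even fun x => G.eval x := fun x => by
    simpa using congr_arg (eval x) (comp_neg_X_eq_self_of_monic_of_orthogonal one_pos hwc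
      (fun _ => genGegenbauerWeight_nonneg) infinite_genGegenbauerWeight_pos
      even_genGegenbauerWeight hGm (hGd ▸ even_two_mul n) hGo)
  refine ⟨fun k hk => ?_, ?_⟩
  · rcases k with _ | k
    · simp only [pow_zero, mul_one]
      exact integral_signed_weight_eq_zero_of_even hα hGeven
    · rw [integral_signed_weight_mul_pow_succ hα]
      exact hG k (by omega)
  · rw [integral_signed_weight_mul_pow_succ hα, ← hGd,
      integral_mul_pow_natDegree_mul_eval_eq (hwc.intervalIntegrable_of_Icc (by norm_num)) hGm hGo]
    exact (integral_mul_eval_sq_pos (by norm_num) hwc (fun _ => genGegenbauerWeight_nonneg)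
      infinite_genGegenbauerWeight_pos hGm.ne_zero).ne'

/-- If `G` is the monic generalized Gegenbauer polynomial of degree `2n` for the weight
`|x|^{2q+2}(1−x²)^{α+1}`, then `(1+x)G(x)` is orthogonal to `x^k`, `0 ≤ k ≤ 2n`, with respect
to the signed weight `x^{2q+1}(1−x²)^α(1−x)`, while its moment of order `2n+1` is nonzero. -/
theorem shifted_gg_orthogonal_signed_weight (α : ℝ) (hα : -1 < α) (q : ℕ) (n : ℕ) (hn : 1 ≤ n)
    (G : Polynomial ℝ) (hGm : G.Monic) (hGd : G.natDegree = 2 * n)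
    (hG : ∀ k : ℕ, k < 2 * n →
      ∫ x in (-1 : ℝ)..1, |x| ^ (2 * q + 2) * (1 - x ^ 2) ^ (α + 1) * x ^ k * G.eval x = 0) :
    (∀ k : ℕ, k < 2 * n + 1 →
      ∫ x in (-1 : ℝ)..1,
        x ^ (2 * q + 1) * (1 - x ^ 2) ^ α * (1 - x) * x ^ k * ((1 + x) * G.eval x) = 0) ∧
    (∫ x in (-1 : ℝ)..1,
        x ^ (2 * q + 1) * (1 - x ^ 2) ^ α * (1 - x) * x ^ (2 * n + 1) * ((1 + x) * G.eval x))
      ≠ 0 :=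
  shifted_gg_orthogonal_signed_weight_general α hα q n G hGm hGd hG
end

section
/- Let α > −1, let q ≥ 0 and n ≥ 0 be integers. Then for every real x, Σ_{k=0}^{n} [(−n)_k (−n−q−1/2)_k / (k! (−2n−α−q−1/2)_k)] x^{2n−2k} = [(−1)^n (q+3/2)_n / (n+q+α+3/2)_n] · Σ_{k=0}^{n} [(−n)_k (n+q+α+3/2)_k / (k! (q+3/2)_k)] x^{2k}. -/
open MeasureTheory intervalIntegral Polynomial

/-- Pochhammer symbol `(a)_k = a (a+1) ⋯ (a+k-1)`. -/
noncomputable def poch (a : ℝ) (k : ℕ) : ℝ := ∏ i ∈ Finset.range k, (a + i)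

/-- `Peven α q n x = P_{2n}^{α,q}(x)`, the monic generalized Gegenbauer-type polynomial
`Σ_{k=0}^{n} (−n)_k (−n−q−1/2)_k / (k! (−2n−α−q−1/2)_k) x^{2n−2k}`. -/
noncomputable def Peven (α : ℝ) (q n : ℕ) (x : ℝ) : ℝ :=
  ∑ k ∈ Finset.range (n + 1),
    poch (-(n : ℝ)) k * poch (-(n : ℝ) - q - 1/2) k /
      ((Nat.factorial k : ℝ) * poch (-(2 * (n : ℝ)) - α - q - 1/2) k) * x ^ (2*n - 2*k)

/-- `Podd α q n x = P_{2n+1}^{α,q}(x) = (1+x) P_{2n}^{α+1,q}(x)`. -/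
noncomputable def Podd (α : ℝ) (q n : ℕ) (x : ℝ) : ℝ := (1 + x) * Peven (α + 1) q n x

/-- `P α q n x = P_n^{α,q}(x)`. -/
noncomputable def P (α : ℝ) (q : ℕ) (n : ℕ) (x : ℝ) : ℝ :=
  if Even n then Peven α q (n / 2) x else Podd α q (n / 2) x

/-!
Reverse the order of summation on the left, `k ↦ n - k`; the two sides then agree term by term.
Each Pochhammer symbol with a negative argument is reflected by `(-a-m+1)_m = (-1)^m (a)_m`, and
splitting `(a)_n = (a)_j (a+j)_m` for `j + m = n` identifies the reflected symbols with quotients of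
the symbols on the right; the signs combine to `(-1)^n (-1)^j = (-1)^m`.
-/

open scoped Nat

lemma poch_succ (a : ℝ) (m : ℕ) : poch a (m + 1) = poch a m * (a + m) :=
  Finset.prod_range_succ _ m

lemma poch_add (a : ℝ) (j m : ℕ) : poch a (j + m) = poch a j * poch (a + j) m := by
  induction m with
  | zero => simp [poch]
  | succ m ih =>
    rw [← Nat.add_assoc, poch_succ, ih, poch_succ, mul_assoc]
    push_cast
    ring_nf

lemma poch_one (k : ℕ) : poch 1 k = k ! := by
  induction k with
  | zero => simp [poch]
  | succ k ih =>
    rw [poch_succ, ih, Nat.factorial_succ]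
    push_cast
    ring

lemma poch_pos {a : ℝ} (ha : 0 < a) (k : ℕ) : 0 < poch a k :=
  Finset.prod_pos fun i _ => by positivity

lemma poch_neg_sub_add_one (a : ℝ) (m : ℕ) : poch (-a - m + 1) m = (-1) ^ m * poch a m := by
  induction m generalizing a with
  | zero => simp [poch]
  | succ m ih =>
    have h := ih (a + 1)
    rw [show -(a + 1) - m + 1 = -a - m by ring] at h
    rw [show -a - ((m + 1 : ℕ) : ℝ) + 1 = -a - m by push_cast; ring, poch_succ, h,
      Nat.add_comm, poch_add]
    simp only [poch, Finset.prod_range_one]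
    push_cast
    ring

lemma poch_mul_poch_neg_sub_add_one {j m n : ℕ} (h : j + m = n) (a : ℝ) :
    poch a j * poch (-a - n + 1) m = (-1) ^ m * poch a n := by
  rw [← h, poch_add, show -a - ((j + m : ℕ) : ℝ) + 1 = -(a + j) - m + 1 by push_cast; ring,
    poch_neg_sub_add_one]
  ring

lemma factorial_mul_poch_neg {j m n : ℕ} (h : j + m = n) :
    (j ! : ℝ) * poch (-(n : ℝ)) m = (-1) ^ m * n ! := by
  have h1 := poch_mul_poch_neg_sub_add_one h 1
  rwa [poch_one, poch_one, show (-1 : ℝ) - n + 1 = -n by ring] at h1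

lemma hypergeometric_term_reflect {j m n : ℕ} (h : j + m = n) (b c : ℝ)
    (hb : poch b n ≠ 0) (hc : poch c j ≠ 0) :
    poch (-(n : ℝ)) m * poch (-c - n + 1) m / (m ! * poch (-b - n + 1) m)
      = (-1) ^ n * poch c n / poch b n *
          (poch (-(n : ℝ)) j * poch b j / (j ! * poch c j)) := by
  have hbj : poch b j ≠ 0 := by
    rw [← h, poch_add] at hb
    exact left_ne_zero_of_mul hb
  have hm : poch (-(n : ℝ)) m = (-1) ^ m * n ! / j ! := by
    rw [← factorial_mul_poch_neg h]; field_simp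
  have hj : poch (-(n : ℝ)) j = (-1) ^ j * n ! / m ! := by
    rw [← factorial_mul_poch_neg ((Nat.add_comm m j).trans h)]; field_simp
  have hcm : poch (-c - n + 1) m = (-1) ^ m * poch c n / poch c j := by
    rw [← poch_mul_poch_neg_sub_add_one h c]; field_simp
  have hbm : poch (-b - n + 1) m = (-1) ^ m * poch b n / poch b j := by
    rw [← poch_mul_poch_neg_sub_add_one h b]; field_simp
  have hsign : (-1 : ℝ) ^ n * (-1) ^ j = (-1) ^ m := by
    rw [← pow_add, ← h, show j + m + j = 2 * j + m by ring, pow_add, pow_mul]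
    norm_num
  rw [hm, hj, hcm, hbm]
  field_simp
  linear_combination (-poch c n) * hsign

/-- The two hypergeometric representations of `P_{2n}^{α,q}` agree:
`Σ_k (−n)_k(−n−q−1/2)_k/(k!(−2n−α−q−1/2)_k) x^{2n−2k}
  = (−1)^n (q+3/2)_n/(n+q+α+3/2)_n · Σ_k (−n)_k(n+q+α+3/2)_k/(k!(q+3/2)_k) x^{2k}`. -/
theorem gg_hypergeometric_representations (α : ℝ) (hα : -1 < α) (q n : ℕ) :
    ∀ x : ℝ,
      Peven α q n x
        = (-1 : ℝ) ^ n * poch ((q : ℝ) + 3/2) n / poch ((n : ℝ) + q + α + 3/2) n *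
            ∑ k ∈ Finset.range (n + 1),
              poch (-(n : ℝ)) k * poch ((n : ℝ) + q + α + 3/2) k /
                ((Nat.factorial k : ℝ) * poch ((q : ℝ) + 3/2) k) * x ^ (2 * k) := by
  intro x
  have hb : 0 < (n : ℝ) + q + α + 3/2 := by
    linarith [(n.cast_nonneg : (0 : ℝ) ≤ n), (q.cast_nonneg : (0 : ℝ) ≤ q)]
  have hc : 0 < (q : ℝ) + 3/2 := by positivity
  rw [Peven, Finset.mul_sum, ← Finset.sum_range_reflect]
  refine Finset.sum_congr rfl fun j hj => ?_
  have hjn : j + (n - j) = n := Nat.add_sub_of_le (Finset.mem_range_succ_iff.1 hj)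
  rw [show n + 1 - 1 - j = n - j by omega, show 2 * n - 2 * (n - j) = 2 * j by omega,
    ← mul_assoc,
    show -(n : ℝ) - q - 1/2 = -((q : ℝ) + 3/2) - n + 1 by ring,
    show -(2 * (n : ℝ)) - α - q - 1/2 = -((n : ℝ) + q + α + 3/2) - n + 1 by ring,
    hypergeometric_term_reflect hjn _ _ (poch_pos hb n).ne' (poch_pos hc j).ne']
end

section
/- Let α > −1, let q ≥ 0 and n ≥ 0 be integers. If Q is a real polynomial of degree 2n+1 such that ∫_{−1}^{1} x^{2q+1} (1−x²)^α (1−x) x^k Q(x) dx = 0 for all integers 0 ≤ k ≤ 2n, then Q(−1) = 0. In other words, the zero of the orthogonal polynomial of odd degree that Perron's theorem allows to leave (−1,1) is exactly the endpoint −1. -/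
/-!
Set `g = (1 - X) Q` and `J(x) = g(x) - g(-x)`, an odd polynomial of degree at most `2n + 2`.
Since the weight `ρ = (1 - x²)^α` is even, the substitution `x ↦ -x` turns the moment
`∫ ρ x^{2q} J x^m` into `(1 - (-1)^m) ∫ ρ x^{2q+m} g`, which vanishes: trivially for even `m`,
and by the orthogonality hypothesis (with `k = m - 1`) for odd `m`. Hence
`∫ ρ (x^q J)² = 0`, so `J = 0` and in particular `0 = J(1) = -2 Q(-1)`.
-/

open MeasureTheory intervalIntegral Polynomial Set
open scoped Interval

theorem integral_mul_eval_eq_zero_of_forall_pow_le {f : ℝ → ℝ} {a b : ℝ} {d : ℕ}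
    (hf : IntervalIntegrable f volume a b) (h : ∀ k ≤ d, ∫ x in a..b, f x * x ^ k = 0)
    {P : ℝ[X]} (hP : P.natDegree ≤ d) : ∫ x in a..b, f x * P.eval x = 0 := by
  have hpow (k : ℕ) : IntervalIntegrable (fun x => P.coeff k * (f x * x ^ k)) volume a b :=
    (hf.mul_continuousOn (by fun_prop)).const_mul _
  simp_rw [eval_eq_sum_range' (Nat.lt_succ_of_le hP), Finset.mul_sum, mul_left_comm (f _)]
  rw [integral_finsetSum fun k _ => hpow k]
  refine Finset.sum_eq_zero fun k hk => ?_
  rw [intervalIntegral.integral_const_mul, h k (Nat.le_of_lt_succ (Finset.mem_range.1 hk)),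
    mul_zero]

theorem Polynomial.eq_zero_of_integral_mul_eval_sq_eq_zero {w : ℝ → ℝ} {a b : ℝ}
    {P : ℝ[X]} (hab : a < b) (hw : ∀ x ∈ Ioo a b, 0 < w x)
    (hint : IntervalIntegrable (fun x => w x * P.eval x ^ 2) volume a b)
    (h : ∫ x in a..b, w x * P.eval x ^ 2 = 0) : P = 0 := by
  by_contra hP
  have hnonneg : 0 ≤ᵐ[volume.restrict (Ι a b)] fun x => w x * P.eval x ^ 2 := by
    rw [uIoc_of_le hab.le, ← Measure.restrict_congr_set Ioo_ae_eq_Ioc]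
    exact ae_restrict_of_forall_mem measurableSet_Ioo fun x hx =>
      mul_nonneg (hw x hx).le (sq_nonneg _)
  have hsupp : Ioo a b \ {x | P.IsRoot x} ⊆
      Function.support (fun x => w x * P.eval x ^ 2) ∩ Ioc a b :=
    fun x ⟨hx, hroot⟩ =>
      ⟨(mul_pos (hw x hx) (pow_two_pos_of_ne_zero hroot)).ne', Ioo_subset_Ioc_self hx⟩
  have hpos : 0 < volume (Ioo a b \ {x | P.IsRoot x}) := by
    rw [measure_sdiff_null ((finite_setOfPred_isRoot hP).measure_zero _), Real.volume_Ioo]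
    exact ENNReal.ofReal_pos.2 (sub_pos.2 hab)
  have := (integral_pos_iff_support_of_nonneg_ae' hnonneg hint).2
    ⟨hab, hpos.trans_le (measure_mono hsupp)⟩
  exact this.ne' h

theorem intervalIntegral.integral_mul_pow_mul_sub_comp_neg {ρ g : ℝ → ℝ} {a : ℝ}
    (hρ : Function.Even ρ) (hρi : IntervalIntegrable ρ volume (-a) a) (hg : Continuous g)
    (N : ℕ) :
    ∫ x in -a..a, ρ x * x ^ N * (g x - g (-x)) =
      (1 - (-1) ^ N) * ∫ x in -a..a, ρ x * x ^ N * g x := by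
  have hflip : ∫ x in -a..a, ρ x * x ^ N * g (-x) =
      (-1) ^ N * ∫ x in -a..a, ρ x * x ^ N * g x := by
    have h := integral_comp_neg (a := -a) (b := a) (fun x => ρ x * x ^ N * g (-x))
    rw [neg_neg] at h
    rw [← h, ← intervalIntegral.integral_const_mul]
    congr 1 with x
    rw [hρ x, neg_neg, neg_pow]
    ring
  simp_rw [mul_sub]
  rw [integral_sub ?_ ?_, hflip]
  · ring
  all_goals simpa only [mul_assoc] using hρi.mul_continuousOn (by fun_prop)

theorem Polynomial.natDegree_sub_comp_neg_X_le {R : Type*} [Ring R] (p : R[X]) :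
    (p - p.comp (-X)).natDegree ≤ p.natDegree := by
  have hX : (-X : R[X]).natDegree ≤ 1 := (natDegree_neg X).trans_le natDegree_X_le
  refine (natDegree_sub_le _ _).trans (max_le le_rfl (natDegree_comp_le.trans ?_))
  simpa using Nat.mul_le_mul_left p.natDegree hX

theorem Polynomial.eval_neg_one_eq_zero_of_orthogonal {ρ : ℝ → ℝ} (hρ : Function.Even ρ)
    (hρ_pos : ∀ x ∈ Ioo (-1 : ℝ) 1, 0 < ρ x) (hρi : IntervalIntegrable ρ volume (-1) 1)
    (q n : ℕ) {Q : ℝ[X]} (hQd : Q.natDegree ≤ 2 * n + 1)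
    (hQ : ∀ k ≤ 2 * n,
      ∫ x in (-1 : ℝ)..1, x ^ (2 * q + 1) * ρ x * (1 - x) * x ^ k * Q.eval x = 0) :
    Q.eval (-1) = 0 := by
  set g : ℝ[X] := (1 - X) * Q
  set J : ℝ[X] := g - g.comp (-X)
  have hJ_eval (x : ℝ) : J.eval x = g.eval x - g.eval (-x) := by
    simp only [J, eval_sub, eval_comp, eval_neg, eval_X]
  have hJ_deg : J.natDegree ≤ 2 * n + 2 := by
    refine (natDegree_sub_comp_neg_X_le g).trans (natDegree_mul_le.trans ?_)
    have : (1 - X : ℝ[X]).natDegree ≤ 1 := by compute_degree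
    omega
  have hmoment : ∀ m ≤ 2 * n + 2,
      ∫ x in (-1 : ℝ)..1, ρ x * (x ^ (2 * q) * J.eval x) * x ^ m = 0 := by
    intro m hm
    calc ∫ x in (-1 : ℝ)..1, ρ x * (x ^ (2 * q) * J.eval x) * x ^ m
        = ∫ x in (-1 : ℝ)..1, ρ x * x ^ (2 * q + m) * (g.eval x - g.eval (-x)) :=
          integral_congr fun x _ => by rw [hJ_eval, pow_add]; ring
      _ = (1 - (-1) ^ (2 * q + m)) * ∫ x in (-1 : ℝ)..1, ρ x * x ^ (2 * q + m) * g.eval x :=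
          integral_mul_pow_mul_sub_comp_neg hρ hρi g.continuous _
      _ = 0 := by
          rcases Nat.even_or_odd m with hm_even | ⟨i, rfl⟩
          · rw [((even_two_mul q).add hm_even).neg_one_pow, sub_self, zero_mul]
          · refine mul_eq_zero_of_right _ ?_
            rw [← hQ (2 * i) (by omega)]
            congr 1 with x
            simp only [g, eval_mul, eval_sub, eval_one, eval_X]
            ring
  have hsq : ∫ x in (-1 : ℝ)..1, ρ x * (X ^ q * J).eval x ^ 2 = 0 := by
    rw [← integral_mul_eval_eq_zero_of_forall_pow_le
      (f := fun x => ρ x * (x ^ (2 * q) * J.eval x)) (hρi.mul_continuousOn (by fun_prop))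
      hmoment hJ_deg]
    congr 1 with x
    simp only [eval_mul, eval_pow, eval_X]
    ring
  have hJ : J = 0 :=
    (mul_eq_zero.1 (eq_zero_of_integral_mul_eval_sq_eq_zero (by norm_num) hρ_pos
      (hρi.mul_continuousOn (by fun_prop)) hsq)).resolve_left (pow_ne_zero _ X_ne_zero)
  have hJ_one := hJ_eval 1
  simp only [hJ, g, eval_zero, eval_mul, eval_sub, eval_one, eval_X] at hJ_one
  linarith

theorem intervalIntegrable_one_sub_sq_rpow {α : ℝ} (hα : -1 < α) :
    IntervalIntegrable (fun x : ℝ => (1 - x ^ 2) ^ α) volume (-1) 1 := by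
  have h01 : IntervalIntegrable (fun x : ℝ => (1 - x ^ 2) ^ α) volume 0 1 := by
    have h1 : IntervalIntegrable (fun x : ℝ => (1 - x) ^ α) volume 0 1 := by
      simpa using ((intervalIntegrable_rpow' hα (a := 0) (b := 1)).comp_sub_left 1).symm
    have h2 : ContinuousOn (fun x : ℝ => (1 + x) ^ α) (uIcc 0 1) := by
      refine ContinuousOn.rpow_const (by fun_prop) fun x hx => Or.inl ?_
      rw [uIcc_of_le zero_le_one] at hx
      linarith [hx.1]
    refine (h1.mul_continuousOn h2).congr_uIoo fun x hx => ?_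
    rw [uIoo_of_le zero_le_one] at hx
    dsimp only
    rw [← Real.mul_rpow (by linarith [hx.2]) (by linarith [hx.1])]
    ring_nf
  have h10 : IntervalIntegrable (fun x : ℝ => (1 - x ^ 2) ^ α) volume (-1) 0 := by
    simpa using ((IntervalIntegrable.iff_comp_neg).1 h01).symm
  exact h10.trans h01

/-- Perron's exceptional zero is the endpoint `−1`: any polynomial of degree `2n+1` orthogonal
to all lower powers with respect to the signed weight `x^{2q+1}(1−x²)^α(1−x)` vanishes
at `−1`. -/
theorem perron_zero_at_minus_one (α : ℝ) (hα : -1 < α) (q n : ℕ) (Q : Polynomial ℝ)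
    (hQd : Q.natDegree = 2 * n + 1)
    (hQ : ∀ k : ℕ, k ≤ 2 * n →
      ∫ x in (-1 : ℝ)..1,
        x ^ (2 * q + 1) * (1 - x ^ 2) ^ α * (1 - x) * x ^ k * Q.eval x = 0) :
    Q.eval (-1) = 0 :=
  eval_neg_one_eq_zero_of_orthogonal (fun x => by simp only [neg_sq])
    (fun x hx => Real.rpow_pos_of_pos (by nlinarith [hx.1, hx.2]) α)
    (intervalIntegrable_one_sub_sq_rpow hα) q n hQd.le hQ
end

section
/- Let α > −1, let q ≥ 0 be an integer, and let n ≥ 1 be an integer. Then for every real x, d/dx P_{2n+1}^{α,q}(x) = P_{2n}^{α+1,q}(x) + 2n · x · (1+x) · P_{2n−2}^{α+2,q+1}(x); equivalently, d/dx P_{2n+1}^{α,q}(x) = P_{2n}^{α+1,q}(x) + 2n · x · P_{2n−1}^{α+1,q+1}(x). -/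
open MeasureTheory intervalIntegral Polynomial

/-!
Differentiating `P_{2n}^{β,q}` term by term, the identity `(-n)_k (2n - 2k) = 2n (1-n)_k` together
with the parameter shifts `-n-q-1/2 = -(n-1)-(q+1)-1/2` and
`-2n-β-q-1/2 = -2(n-1)-(β+1)-(q+1)-1/2` turns its coefficients into `2n` times those of
`P_{2n-2}^{β+1,q+1}`, so `(P_{2n}^{β,q})' = 2n x P_{2n-2}^{β+1,q+1}`. The product rule applied to
`P_{2n+1}^{α,q} = (1+x) P_{2n}^{α+1,q}` then gives the formula.
-/

noncomputable def pevenCoeff (α : ℝ) (q n k : ℕ) : ℝ :=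
  poch (-(n : ℝ)) k * poch (-(n : ℝ) - q - 1/2) k /
    ((Nat.factorial k : ℝ) * poch (-(2 * (n : ℝ)) - α - q - 1/2) k)

lemma Peven_eq_sum (α : ℝ) (q n : ℕ) (x : ℝ) :
    Peven α q n x = ∑ k ∈ Finset.range (n + 1), pevenCoeff α q n k * x ^ (2 * (n - k)) := by
  unfold Peven pevenCoeff
  refine Finset.sum_congr rfl fun k _ => ?_
  rw [Nat.mul_sub]

lemma poch_succ_right (a : ℝ) (k : ℕ) : poch a (k + 1) = poch a k * (a + k) :=
  Finset.prod_range_succ _ _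

lemma poch_succ_left (a : ℝ) (k : ℕ) : poch a (k + 1) = a * poch (a + 1) k := by
  rw [poch, Finset.prod_range_succ', mul_comm]
  congr 1
  · simp
  · exact Finset.prod_congr rfl fun i _ => by push_cast; ring

/-- Expanding `(-a)_{k+1}` at both ends. -/
lemma poch_neg_mul_sub (a : ℝ) (k : ℕ) : poch (-a) k * (a - k) = a * poch (1 - a) k := by
  have h := (poch_succ_right (-a) k).symm.trans (poch_succ_left (-a) k)
  rw [show -a + 1 = 1 - a by ring] at h
  linear_combination -h

lemma pevenCoeff_mul_two_mul_sub (β : ℝ) (q m k : ℕ) :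
    pevenCoeff β q (m + 1) k * (2 * ((m + 1 : ℕ) - k : ℝ))
      = 2 * (m + 1 : ℕ) * pevenCoeff (β + 1) (q + 1) m k := by
  have h := poch_neg_mul_sub ((m + 1 : ℕ) : ℝ) k
  unfold pevenCoeff
  push_cast at h ⊢
  rw [show (1 : ℝ) - (m + 1) = -m by ring] at h
  rw [show -((m : ℝ) + 1) - q - 1/2 = -m - (q + 1) - 1/2 by ring,
    show -(2 * ((m : ℝ) + 1)) - β - q - 1/2 = -(2 * m) - (β + 1) - (q + 1) - 1/2 by ring]
  linear_combination 2 * poch (-m - (q + 1) - 1/2) k /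
    (k.factorial * poch (-(2 * m) - (β + 1) - (q + 1) - 1/2) k) * h

lemma hasDerivAt_Peven_succ (β : ℝ) (q m : ℕ) (x : ℝ) :
    HasDerivAt (Peven β q (m + 1))
      (2 * (m + 1 : ℕ) * x * Peven (β + 1) (q + 1) m x) x := by
  have h : HasDerivAt (Peven β q (m + 1))
      (∑ k ∈ Finset.range (m + 2),
        pevenCoeff β q (m + 1) k * ((2 * (m + 1 - k) : ℕ) * x ^ (2 * (m + 1 - k) - 1))) x := by
    simp_rw [funext (Peven_eq_sum β q (m + 1))]
    exact HasDerivAt.fun_sum fun k _ => (hasDerivAt_pow _ x).const_mul _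
  convert h using 1
  rw [Finset.sum_range_succ, Nat.sub_self, mul_zero, Nat.cast_zero, zero_mul, mul_zero, add_zero,
    Peven_eq_sum, Finset.mul_sum]
  refine Finset.sum_congr rfl fun k hk => ?_
  have hkm : k ≤ m := Nat.lt_succ_iff.mp (Finset.mem_range.mp hk)
  rw [show 2 * (m + 1 - k) - 1 = 2 * (m - k) + 1 by omega, pow_succ,
    show ((2 * (m + 1 - k) : ℕ) : ℝ) = 2 * ((m + 1 : ℕ) - k : ℝ) by
      rw [Nat.cast_mul, Nat.cast_sub (by omega : k ≤ m + 1)]; push_cast; ring]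
  linear_combination -(x ^ (2 * (m - k)) * x) * pevenCoeff_mul_two_mul_sub β q m k

lemma hasDerivAt_Podd_succ (α : ℝ) (q m : ℕ) (x : ℝ) :
    HasDerivAt (Podd α q (m + 1))
      (Peven (α + 1) q (m + 1) x
        + 2 * (m + 1 : ℕ) * x * Podd (α + 1) (q + 1) m x) x := by
  have h := ((hasDerivAt_id x).const_add 1).mul (hasDerivAt_Peven_succ (α + 1) q m x)
  refine h.congr_deriv ?_
  simp only [Podd, id]
  ring

theorem deriv_Podd_general (α : ℝ) (q : ℕ) (n : ℕ) (hn : 1 ≤ n) :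
    ∀ x : ℝ,
      deriv (Podd α q n) x
          = Peven (α + 1) q n x
            + 2 * (n : ℝ) * x * ((1 + x) * Peven (α + 2) (q + 1) (n - 1) x) ∧
      deriv (Podd α q n) x
          = Peven (α + 1) q n x + 2 * (n : ℝ) * x * Podd (α + 1) (q + 1) (n - 1) x := by
  intro x
  obtain ⟨m, rfl⟩ := Nat.exists_eq_add_of_le' hn
  have hd := (hasDerivAt_Podd_succ α q m x).deriv
  rw [Nat.add_sub_cancel]
  refine ⟨?_, hd⟩
  rw [hd, Podd, add_assoc, one_add_one_eq_two]

/-- Derivative formula: `(P_{2n+1}^{α,q})'(x) = P_{2n}^{α+1,q}(x) + 2n·x·(1+x)·P_{2n−2}^{α+2,q+1}(x)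
= P_{2n}^{α+1,q}(x) + 2n·x·P_{2n−1}^{α+1,q+1}(x)`. -/
theorem deriv_Podd (α : ℝ) (hα : -1 < α) (q : ℕ) (n : ℕ) (hn : 1 ≤ n) :
    ∀ x : ℝ,
      deriv (Podd α q n) x
          = Peven (α + 1) q n x
            + 2 * (n : ℝ) * x * ((1 + x) * Peven (α + 2) (q + 1) (n - 1) x) ∧
      deriv (Podd α q n) x
          = Peven (α + 1) q n x + 2 * (n : ℝ) * x * Podd (α + 1) (q + 1) (n - 1) x :=
  deriv_Podd_general α q n hn
end
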